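/- arXiv:2412.17985 — 3 statements merged into one kernel-verified Lean document; each statement's English description precedes it below -/
import Mathlib

section
/- Let A ⊆ ℝⁿ be Borel with Hausdorff dimension dim A > 1. Then for every x ∈ ℝⁿ, the radial projection π_x(A \ {x}) ⊆ S^{n-1} satisfies dim π_x(A \ {x}) ≥ dim A - 1. -/
/-!
Translating by `-x`, the set `A \ {x}` lies in the cone `ℝ • π_x(A \ {x})`. Cutting the cone into
the pieces `|s| ≤ m`, `‖z‖ ≤ m`, each piece is a Lipschitz image of `[-m, m] × B_m` with
`B_m ⊆ π_x(A \ {x})`, so it suffices that `dim ([a, b] × t) ≤ 1 + dim t`. For that, a cover of `t`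
by sets `U j` with `∑ (diam U j)^d` small is refined into the boxes `[a + i w_j, a + (i+1) w_j] × U j`
with `w_j ≈ diam U j`: there are about `(b - a) / w_j` of them, so their `(d+1)`-sums are
`≲ (b - a + 1) ∑ w_j ^ d`, again small.
-/

open MeasureTheory Set
open scoped ENNReal

/-- The radial projection `π_x(y) = (y-x)/|y-x|`. -/
noncomputable def radialProj {n : ℕ} (x y : EuclideanSpace ℝ (Fin n)) :
    EuclideanSpace ℝ (Fin n) :=
  ‖y - x‖⁻¹ • (y - x)

open Filter Metric
open scoped NNReal Pointwise

section HausdorffMeasure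

variable {X : Type*} [EMetricSpace X] [MeasurableSpace X] [BorelSpace X]

theorem exists_cover_tsum_ediam_rpow_lt {d : ℝ} (hd : 0 < d) {s : Set X} (hs : μH[d] s = 0)
    {r ε : ℝ≥0∞} (hr : 0 < r) (hε : 0 < ε) :
    ∃ U : ℕ → Set X, s ⊆ ⋃ n, U n ∧ (∀ n, ediam (U n) ≤ r) ∧ ∑' n, ediam (U n) ^ d < ε := by
  have h : (⨅ (U : ℕ → Set X) (_ : s ⊆ ⋃ n, U n) (_ : ∀ n, ediam (U n) ≤ r),
      ∑' n, ⨆ _ : (U n).Nonempty, ediam (U n) ^ d) < ε := by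
    refine lt_of_le_of_lt ?_ (hs ▸ hε)
    rw [Measure.hausdorffMeasure_apply]
    exact le_iSup₂_of_le (α := ℝ≥0∞) r hr le_rfl
  simp only [iInf_lt_iff] at h
  obtain ⟨U, hsU, hUr, hU⟩ := h
  refine ⟨U, hsU, hUr, lt_of_eq_of_lt (tsum_congr fun n => ?_) hU⟩
  rcases (U n).eq_empty_or_nonempty with hn | hn
  · simp [hn, hd]
  · rw [iSup_pos hn]

theorem hausdorffMeasure_eq_zero_of_forall_cover {ι : Type*} [Countable ι] {d : ℝ} {s : Set X}
    (h : ∀ r > 0, ∀ ε > 0, ∃ U : ι → Set X,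
      s ⊆ ⋃ i, U i ∧ (∀ i, ediam (U i) ≤ r) ∧ ∑' i, ediam (U i) ^ d ≤ ε) :
    μH[d] s = 0 := by
  refine le_antisymm (ENNReal.le_of_forall_pos_le_add fun ε hε _ => ?_) zero_le
  choose U hsU hUr hU using fun k : ℕ => h (k : ℝ≥0∞)⁻¹ (by simp) ε (by simpa using hε)
  calc μH[d] s ≤ liminf (fun k => ∑' i, ediam (U k i) ^ d) atTop :=
        Measure.hausdorffMeasure_le_liminf_tsum d s _ ENNReal.tendsto_inv_nat_nhds_zero U
          (.of_forall hUr) (.of_forall hsU)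
    _ ≤ 0 + ε := by
        rw [zero_add]
        exact liminf_le_of_frequently_le' (.of_forall hU)

end HausdorffMeasure

theorem Metric.ediam_prod_le {X Y : Type*} [PseudoEMetricSpace X] [PseudoEMetricSpace Y]
    (s : Set X) (t : Set Y) : ediam (s ×ˢ t) ≤ max (ediam s) (ediam t) :=
  ediam_le fun _ ⟨hx₁, hy₁⟩ _ ⟨hx₂, hy₂⟩ =>
    max_le_max (edist_le_ediam_of_mem hx₁ hx₂) (edist_le_ediam_of_mem hy₁ hy₂)

theorem ENNReal.exists_pos_le_tsum_rpow_lt (ι : Type*) [Countable ι] {d : ℝ} (hd : 0 < d)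
    {ρ ε : ℝ≥0∞} (hρ : 0 < ρ) (hε : ε ≠ 0) :
    ∃ η : ι → ℝ≥0∞, (∀ i, 0 < η i ∧ η i ≤ ρ) ∧ ∑' i, η i ^ d < ε := by
  obtain ⟨θ, hθ, hθε⟩ := ENNReal.exists_pos_sum_of_countable hε ι
  refine ⟨fun i => min ρ ((θ i : ℝ≥0∞) ^ d⁻¹), fun i => ⟨lt_min hρ ?_, min_le_left _ _⟩, ?_⟩
  · exact ENNReal.rpow_pos (by simpa using hθ i) ENNReal.coe_ne_top
  · refine lt_of_le_of_lt (ENNReal.tsum_le_tsum fun i => ?_) hθε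
    calc min ρ ((θ i : ℝ≥0∞) ^ d⁻¹) ^ d ≤ ((θ i : ℝ≥0∞) ^ d⁻¹) ^ d :=
          ENNReal.rpow_le_rpow (min_le_right _ _) hd.le
      _ = θ i := ENNReal.rpow_inv_rpow hd.ne' _

theorem exists_cover_Icc_prod {Y : Type*} [PseudoEMetricSpace Y] {a b w : ℝ} (hab : a ≤ b)
    (hw : 0 < w) {U : Set Y} (hU : ediam U ≤ ENNReal.ofReal w) {d : ℝ} (hd : 0 ≤ d) :
    ∃ V : ℕ → Set (ℝ × Y), Icc a b ×ˢ U ⊆ ⋃ i, V i ∧ (∀ i, ediam (V i) ≤ ENNReal.ofReal w) ∧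
      ∑' i, ediam (V i) ^ (d + 1) ≤ ENNReal.ofReal (b - a + w) * ENNReal.ofReal w ^ d := by
  set N := ⌊(b - a) / w⌋₊ + 1
  have hNw : (N : ℝ) * w ≤ b - a + w := by
    have := Nat.floor_le (div_nonneg (sub_nonneg.2 hab) hw.le)
    rw [le_div_iff₀ hw] at this
    push_cast [N]
    linarith
  let V : ℕ → Set (ℝ × Y) := fun i => if i < N then Icc (a + i * w) (a + (i + 1) * w) ×ˢ U else ∅
  have hV : ∀ i, ediam (V i) ≤ ENNReal.ofReal w := by
    intro i
    by_cases hi : i < N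
    · simp only [V, if_pos hi]
      refine (ediam_prod_le _ _).trans (max_le ?_ hU)
      rw [Real.ediam_Icc]
      exact ENNReal.ofReal_le_ofReal (by linarith)
    · simp [V, if_neg hi]
  refine ⟨V, ?_, hV, ?_⟩
  · rintro ⟨s, y⟩ ⟨hs, hy⟩
    set i := ⌊(s - a) / w⌋₊
    have hsa : 0 ≤ (s - a) / w := div_nonneg (sub_nonneg.2 hs.1) hw.le
    have hiN : i < N := Nat.lt_succ_of_le (Nat.floor_le_floor (by gcongr; exact hs.2))
    have hi₁ := Nat.floor_le hsa
    have hi₂ := Nat.lt_floor_add_one ((s - a) / w)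
    rw [le_div_iff₀ hw] at hi₁
    rw [div_lt_iff₀ hw] at hi₂
    refine mem_iUnion.2 ⟨i, ?_⟩
    simp only [V, if_pos hiN]
    exact ⟨⟨by linarith, by linarith⟩, hy⟩
  · have hzero : ∀ i ∉ Finset.range N, ediam (V i) ^ (d + 1) = 0 := by
      intro i hi
      simp [V, if_neg (Finset.mem_range.not.1 hi),
        ENNReal.zero_rpow_of_pos (by linarith : 0 < d + 1)]
    rw [tsum_eq_sum hzero]
    calc ∑ i ∈ Finset.range N, ediam (V i) ^ (d + 1) ≤ N * ENNReal.ofReal w ^ (d + 1) := by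
          simpa using Finset.sum_le_card_nsmul (Finset.range N) (fun i => ediam (V i) ^ (d + 1))
            _ fun i _ => ENNReal.rpow_le_rpow (hV i) (by linarith)
      _ = ENNReal.ofReal (N * w) * ENNReal.ofReal w ^ d := by
          rw [ENNReal.rpow_add _ _ (by simpa using hw) ENNReal.ofReal_ne_top, ENNReal.rpow_one,
            ENNReal.ofReal_mul (by positivity), ENNReal.ofReal_natCast, mul_assoc,
            mul_comm (ENNReal.ofReal w ^ d)]
      _ ≤ ENNReal.ofReal (b - a + w) * ENNReal.ofReal w ^ d := by
          gcongr

theorem hausdorffMeasure_Icc_prod_eq_zero {Y : Type*} [EMetricSpace Y] [MeasurableSpace Y]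
    [BorelSpace Y] [SecondCountableTopology Y] (a b : ℝ) {d : ℝ} (hd : 0 < d) {t : Set Y}
    (ht : μH[d] t = 0) : μH[d + 1] (Icc a b ×ˢ t) = 0 := by
  rcases lt_or_ge b a with hba | hab
  · simp [Icc_eq_empty hba.not_ge]
  refine hausdorffMeasure_eq_zero_of_forall_cover (ι := ℕ × ℕ) fun r hr ε hε => ?_
  set C := ENNReal.ofReal (b - a + 1)
  obtain ⟨δ, hδ, hδε⟩ := ENNReal.exists_nnreal_pos_mul_lt (a := 2 * C) (by finiteness) hε.ne'
  set ρ := min r 1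
  have hρ : 0 < ρ := lt_min hr one_pos
  obtain ⟨U, htU, hUρ, hU⟩ := exists_cover_tsum_ediam_rpow_lt hd ht hρ (ENNReal.coe_pos.2 hδ)
  obtain ⟨η, hη, hηδ⟩ := ENNReal.exists_pos_le_tsum_rpow_lt ℕ hd hρ (ENNReal.coe_ne_zero.2 hδ.ne')
  -- `η` keeps every width positive, also where `ediam (U j) = 0`, at a cost of `∑ η j ^ d < δ`
  set w : ℕ → ℝ≥0∞ := fun j => max (ediam (U j)) (η j)
  have hwρ : ∀ j, w j ≤ ρ := fun j => max_le (hUρ j) (hη j).2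
  have hw_ne_top : ∀ j, w j ≠ ∞ := fun j => ne_top_of_le_ne_top (by simp [ρ]) (hwρ j)
  have hw_pos : ∀ j, 0 < (w j).toReal :=
    fun j => ENNReal.toReal_pos ((hη j).1.trans_le (le_max_right _ _)).ne' (hw_ne_top j)
  have hw : ∀ j, ENNReal.ofReal (w j).toReal = w j := fun j => ENNReal.ofReal_toReal (hw_ne_top j)
  choose V htV hVw hV using fun j =>
    exists_cover_Icc_prod hab (hw_pos j) ((hw j).symm ▸ le_max_left _ _ : ediam (U j) ≤ _) hd.le
  refine ⟨fun p => V p.1 p.2, ?_, fun p => ?_, ?_⟩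
  · rintro ⟨s, y⟩ ⟨hs, hy⟩
    obtain ⟨j, hj⟩ := mem_iUnion.1 (htU hy)
    obtain ⟨i, hi⟩ := mem_iUnion.1 (htV j ⟨hs, hj⟩)
    exact mem_iUnion.2 ⟨(j, i), hi⟩
  · exact (hVw p.1 p.2).trans ((hw p.1).trans_le ((hwρ p.1).trans (min_le_left _ _)))
  · have hC : ∀ j, ENNReal.ofReal (b - a + (w j).toReal) ≤ C := fun j =>
      have hw₁ : (w j).toReal ≤ 1 := ENNReal.toReal_le_of_le_ofReal zero_le_one
        (ENNReal.ofReal_one ▸ (hwρ j).trans (min_le_right _ _))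
      ENNReal.ofReal_le_ofReal (by linarith)
    calc ∑' p : ℕ × ℕ, ediam (V p.1 p.2) ^ (d + 1)
        = ∑' j, ∑' i, ediam (V j i) ^ (d + 1) :=
          ENNReal.tsum_prod (f := fun j i => ediam (V j i) ^ (d + 1))
      _ ≤ ∑' j, C * (ediam (U j) ^ d + η j ^ d) := by
          refine ENNReal.tsum_le_tsum fun j => (hV j).trans ?_
          rw [hw]
          gcongr
          · exact hC j
          · rw [ENNReal.max_rpow hd.le]
            exact max_le le_self_add le_add_self
      _ = C * (∑' j, ediam (U j) ^ d + ∑' j, η j ^ d) := by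
          rw [ENNReal.tsum_mul_left, ENNReal.tsum_add]
      _ ≤ C * (δ + δ) := by gcongr
      _ = δ * (2 * C) := by ring
      _ ≤ ε := hδε.le

theorem dimH_Icc_prod_le {Y : Type*} [EMetricSpace Y] [SecondCountableTopology Y] (a b : ℝ)
    (t : Set Y) : dimH (Icc a b ×ˢ t) ≤ 1 + dimH t := by
  borelize Y
  refine ENNReal.le_of_forall_pos_le_add fun ε hε hlt => ?_
  have htop : dimH t ≠ ∞ := (ENNReal.add_lt_top.1 hlt).2.ne
  set d : ℝ≥0 := (dimH t).toNNReal + ε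
  have hd : (d : ℝ≥0∞) = dimH t + ε := by rw [ENNReal.coe_add, ENNReal.coe_toNNReal htop]
  have hdt : dimH t < d := hd ▸ ENNReal.lt_add_right htop (by simpa using hε.ne')
  have hprod : μH[(d : ℝ) + 1] (Icc a b ×ˢ t) = 0 :=
    hausdorffMeasure_Icc_prod_eq_zero a b (by simpa using pos_of_gt hdt)
      (hausdorffMeasure_of_dimH_lt hdt)
  calc dimH (Icc a b ×ˢ t) ≤ (d + 1 : ℝ≥0) :=
        dimH_le_of_hausdorffMeasure_ne_top (by push_cast; simp [hprod])
    _ = 1 + dimH t + ε := by rw [ENNReal.coe_add, hd, ENNReal.coe_one]; ring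

section Cone

variable {E : Type*} [NormedAddCommGroup E] [NormedSpace ℝ E]

theorem lipschitzOnWith_smul_closedBall_prod (R : ℝ≥0) :
    LipschitzOnWith (2 * R) (fun p : ℝ × E => p.1 • p.2) (closedBall 0 R ×ˢ closedBall 0 R) := by
  rw [lipschitzOnWith_iff_dist_le_mul]
  rintro ⟨s, z⟩ ⟨hs, -⟩ ⟨s', z'⟩ ⟨-, hz'⟩
  rw [mem_closedBall_zero_iff] at hs hz'
  have hss' : ‖s - s'‖ ≤ dist (s, z) (s', z') := (dist_eq_norm s s').symm.trans_le (le_max_left _ _)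
  have hzz' : ‖z - z'‖ ≤ dist (s, z) (s', z') := (dist_eq_norm z z').symm.trans_le (le_max_right _ _)
  calc dist (s • z) (s' • z') = ‖s • (z - z') + (s - s') • z'‖ := by
        rw [dist_eq_norm]; congr 1; module
    _ ≤ ‖s‖ * ‖z - z'‖ + ‖s - s'‖ * ‖z'‖ := by
        simpa only [norm_smul] using norm_add_le (s • (z - z')) ((s - s') • z')
    _ ≤ R * dist (s, z) (s', z') + dist (s, z) (s', z') * R := by gcongr
    _ = ↑(2 * R) * dist (s, z) (s', z') := by push_cast; ring

theorem dimH_univ_smul_le [SecondCountableTopology E] (B : Set E) :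
    dimH ((univ : Set ℝ) • B) ≤ 1 + dimH B := by
  have hcover : (univ : Set ℝ) • B ⊆ ⋃ m : ℕ,
      (fun p : ℝ × E => p.1 • p.2) '' (closedBall 0 m ×ˢ (B ∩ closedBall 0 m)) := by
    rintro _ ⟨s, -, z, hz, rfl⟩
    obtain ⟨m, hm⟩ := exists_nat_ge (max ‖s‖ ‖z‖)
    refine mem_iUnion.2 ⟨m, (s, z), ⟨?_, hz, ?_⟩, rfl⟩
    · exact mem_closedBall_zero_iff.2 ((le_max_left _ _).trans hm)
    · exact mem_closedBall_zero_iff.2 ((le_max_right _ _).trans hm)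
  refine (dimH_mono hcover).trans ?_
  rw [dimH_iUnion]
  refine iSup_le fun m => ?_
  have hlip := (lipschitzOnWith_smul_closedBall_prod (E := E) m).mono
    (prod_mono subset_rfl (inter_subset_right (s := B)))
  calc _ ≤ dimH (closedBall (0 : ℝ) m ×ˢ (B ∩ closedBall 0 m)) := by
        simpa using hlip.dimH_image_le
    _ ≤ 1 + dimH (B ∩ closedBall 0 m) := by
        rw [Real.closedBall_eq_Icc]
        exact dimH_Icc_prod_le _ _ _
    _ ≤ 1 + dimH B := by gcongr; exact inter_subset_left

end Cone

theorem dimH_insert {X : Type*} [EMetricSpace X] (x : X) (s : Set X) :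
    dimH (insert x s) = dimH s := by
  rw [insert_eq, dimH_union, dimH_singleton, max_eq_right zero_le]

theorem norm_smul_radialProj {n : ℕ} {x y : EuclideanSpace ℝ (Fin n)} (h : y ≠ x) :
    ‖y - x‖ • radialProj x y = y - x := by
  rw [radialProj, smul_smul, mul_inv_cancel₀ (norm_ne_zero_iff.2 (sub_ne_zero.2 h)), one_smul]

theorem dimH_le_one_add_dimH_radialProj {n : ℕ} (A : Set (EuclideanSpace ℝ (Fin n)))
    (x : EuclideanSpace ℝ (Fin n)) : dimH A ≤ 1 + dimH (radialProj x '' (A \ {x})) := by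
  have hcone : (· - x) '' (A \ {x}) ⊆ (univ : Set ℝ) • radialProj x '' (A \ {x}) := by
    rintro _ ⟨y, hy, rfl⟩
    exact ⟨‖y - x‖, mem_univ _, radialProj x y, mem_image_of_mem _ hy, norm_smul_radialProj hy.2⟩
  calc dimH A ≤ dimH (insert x (A \ {x})) := dimH_mono (subset_insert_sdiff_singleton x A)
    _ = dimH ((· - x) '' (A \ {x})) :=
        (dimH_insert x _).trans ((IsometryEquiv.subRight x).dimH_image _).symm
    _ ≤ 1 + dimH (radialProj x '' (A \ {x})) := (dimH_mono hcone).trans (dimH_univ_smul_le _)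

theorem radial_projection_dim_lower_general {n : ℕ} (A : Set (EuclideanSpace ℝ (Fin n)))
    (x : EuclideanSpace ℝ (Fin n)) :
    dimH (radialProj x '' (A \ {x})) ≥ dimH A - 1 :=
  tsub_le_iff_left.2 (dimH_le_one_add_dimH_radialProj A x)

/-- If `A ⊆ ℝⁿ` is Borel with `dim A > 1`, then for every `x`,
`dim π_x(A \ {x}) ≥ dim A - 1`. -/
theorem radial_projection_dim_lower {n : ℕ} (A : Set (EuclideanSpace ℝ (Fin n)))
    (hA : MeasurableSet A) (hdim : 1 < dimH A) (x : EuclideanSpace ℝ (Fin n)) :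
    dimH (radialProj x '' (A \ {x})) ≥ dimH A - 1 :=
  radial_projection_dim_lower_general A x
end

section
/- There exist compact sets X, Y ⊆ ℝ with dim X = dim Y = 0 whose difference set X - Y := {x - y : x ∈ X, y ∈ Y} contains an interval (in fact contains [0,1]). -/
open MeasureTheory Set
open scoped ENNReal

/-!
Split the binary digits of `t ∈ [0, 1]` along a set `S ⊆ ℕ`: `t = x + y`, where `x` keeps the
digits in `S` and `y` those in `Sᶜ`, so `t = x - (-y)`. If `S` has lower density zero, the numbers
whose digits vanish off `S` are covered, at scale `2⁻ᴺ`, by `2 ^ #(S ∩ [0, N))` intervals, which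
forces Hausdorff dimension zero. For `S` the union of the even-indexed blocks
`[2 ^ 2 ^ j, 2 ^ 2 ^ (j + 1))`, each block ends at the square of its start, so both `S` and `Sᶜ`
miss intervals `[m, m ^ 2)` for arbitrarily large `m` and have lower density zero.
-/

open Filter Topology Pointwise

theorem dimH_eq_zero_of_frequently_card_mul_rpow_le_one {X : Type*} [EMetricSpace X] {s : Set X}
    {ι : ℕ → Type*} [∀ n, Finite (ι n)] (t : ∀ n, ι n → Set X) (r : ℕ → ℝ≥0∞)
    (hr : Tendsto r atTop (𝓝 0)) (ht : ∀ n i, Metric.ediam (t n i) ≤ r n)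
    (hst : ∀ n, s ⊆ ⋃ i, t n i)
    (hcard : ∀ d : ℝ, 0 < d → ∃ᶠ n in atTop, (Nat.card (ι n) : ℝ≥0∞) * r n ^ d ≤ 1) :
    dimH s = 0 := by
  borelize X
  refine le_antisymm (ENNReal.le_of_forall_pos_le_add fun d hd _ => ?_) zero_le
  rw [zero_add]
  refine dimH_le_of_hausdorffMeasure_ne_top (ne_top_of_le_ne_top ENNReal.one_ne_top ?_)
  calc μH[d] s ≤ liminf (fun n => ∑' i, Metric.ediam (t n i) ^ (d : ℝ)) atTop :=
        Measure.hausdorffMeasure_le_liminf_tsum _ s r hr t (.of_forall ht) (.of_forall hst)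
    _ ≤ 1 := by
      refine liminf_le_of_frequently_le' ((hcard d hd).mono fun n hn => le_trans ?_ hn)
      calc ∑' i, Metric.ediam (t n i) ^ (d : ℝ) ≤ ∑' _ : ι n, r n ^ (d : ℝ) :=
            ENNReal.tsum_le_tsum fun i => ENNReal.rpow_le_rpow (ht n i) d.2
        _ = Nat.card (ι n) * r n ^ (d : ℝ) := by
            rw [ENNReal.tsum_const, ENat.card_eq_coe_natCard]; rfl

theorem Real.ofDigits_piecewise_add_ofDigits_piecewise {b : ℕ} [NeZero b] (S : Set ℕ)
    [DecidablePred (· ∈ S)] (a : ℕ → Fin b) :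
    Real.ofDigits (S.piecewise a 0) + Real.ofDigits (S.piecewise 0 a) = Real.ofDigits a := by
  rw [Real.ofDigits, Real.ofDigits, Real.ofDigits,
    ← Real.summable_ofDigitsTerm.tsum_add Real.summable_ofDigitsTerm]
  congr! 2 with n
  by_cases hn : n ∈ S <;> simp [Real.ofDigitsTerm, hn]

noncomputable def binaryDigitSet (S : Set ℕ) : Set ℝ :=
  Real.ofDigits '' Sᶜ.pi fun _ => ({0} : Set (Fin 2))

theorem isCompact_binaryDigitSet (S : Set ℕ) : IsCompact (binaryDigitSet S) :=
  (isClosed_set_pi fun _ _ => isClosed_singleton).isCompact.image Real.continuous_ofDigits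

theorem Icc_subset_binaryDigitSet_add_binaryDigitSet_compl (S : Set ℕ) :
    Icc (0 : ℝ) 1 ⊆ binaryDigitSet S + binaryDigitSet Sᶜ := by
  classical
  intro x hx
  obtain ⟨a, -, rfl⟩ := Real.ofDigits_SurjOn one_lt_two hx
  rw [← Real.ofDigits_piecewise_add_ofDigits_piecewise S a]
  refine add_mem_add ⟨_, fun n hn => ?_, rfl⟩ ⟨_, fun n hn => ?_, rfl⟩
  · simp [Set.piecewise, show n ∉ S from hn]
  · simp [Set.piecewise, not_not.mp hn]

theorem dimH_binaryDigitSet_eq_zero {S : Set ℕ}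
    (hS : ∀ ε : ℝ, 0 < ε → ∃ᶠ N in atTop, ((S ∩ Iio N).ncard : ℝ) ≤ ε * N) :
    dimH (binaryDigitSet S) = 0 := by
  have : ∀ N, Finite ↥(S ∩ Iio N) := fun N => ((finite_Iio N).inter_of_right S).to_subtype
  refine dimH_eq_zero_of_frequently_card_mul_rpow_le_one
    (ι := fun N => ↥(S ∩ Iio N) → Fin 2)
    (fun N p => Real.ofDigits '' {a ∈ Sᶜ.pi fun _ => {0} | ∀ n : ↥(S ∩ Iio N), a n = p n})
    (fun N => 2⁻¹ ^ N) ?_ ?_ ?_ ?_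
  · exact ENNReal.tendsto_pow_atTop_nhds_zero_of_lt_one (by norm_num)
  · refine fun N p => Metric.ediam_le ?_
    rintro - ⟨a, ⟨ha, hap⟩, rfl⟩ - ⟨a', ⟨ha', hap'⟩, rfl⟩
    have hagree : ∀ i < N, a i = a' i := fun i hi => by
      by_cases hiS : i ∈ S
      · exact (hap ⟨i, hiS, hi⟩).trans (hap' ⟨i, hiS, hi⟩).symm
      · exact (ha i hiS).trans (ha' i hiS).symm
    rw [edist_dist, Real.dist_eq]
    convert ENNReal.ofReal_le_ofReal (Real.abs_ofDigits_sub_ofDigits_le hagree)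
    simp [ENNReal.ofReal_inv_of_pos, ENNReal.ofReal_pow, ENNReal.inv_pow]
  · rintro N - ⟨a, ha, rfl⟩
    exact mem_iUnion.2 ⟨fun n => a n, a, ⟨ha, fun _ => rfl⟩, rfl⟩
  · intro d hd
    refine (hS d hd).mono fun N hN => ?_
    rw [Nat.card_fun, Nat.card_coe_set_eq, Nat.card_fin]
    have hpow : ((2 ^ (S ∩ Iio N).ncard : ℕ) : ℝ≥0∞) ≤ 2 ^ ((N : ℝ) * d) := by
      rw [Nat.cast_pow, Nat.cast_ofNat, ← ENNReal.rpow_natCast]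
      exact ENNReal.rpow_le_rpow_of_exponent_le one_le_two (by linarith)
    rw [← ENNReal.rpow_natCast, ← ENNReal.rpow_mul, ENNReal.inv_rpow, ← div_eq_mul_inv]
    exact ENNReal.div_le_of_le_mul (by rwa [one_mul])

theorem frequently_ncard_inter_Iio_le_of_frequently_disjoint_Ico {S : Set ℕ}
    (hS : ∃ᶠ m in atTop, Disjoint S (Ico m (m ^ 2))) (ε : ℝ) (hε : 0 < ε) :
    ∃ᶠ N in atTop, ((S ∩ Iio N).ncard : ℝ) ≤ ε * N := by
  obtain ⟨M, hM⟩ := exists_nat_gt ε⁻¹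
  refine (tendsto_pow_atTop two_ne_zero).frequently
    ((hS.and_eventually (eventually_ge_atTop M)).mono fun m ⟨hdisj, hMm⟩ => ?_)
  have hsub : S ∩ Iio (m ^ 2) ⊆ Iio m := fun n ⟨hnS, hn⟩ =>
    lt_of_not_ge fun hmn => hdisj.notMem_of_mem_left hnS ⟨hmn, hn⟩
  have hcard : ((S ∩ Iio (m ^ 2)).ncard : ℝ) ≤ m := by
    exact_mod_cast (ncard_le_ncard hsub (finite_Iio m)).trans (ncard_Iio_nat m).le
  have hεm : 1 ≤ ε * m := by
    have : ε⁻¹ < m := hM.trans_le (by exact_mod_cast hMm)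
    rw [inv_lt_iff_one_lt_mul₀ hε, mul_comm] at this
    exact this.le
  push_cast
  nlinarith

theorem log_log_eq_of_mem_Ico {j n : ℕ} (hn : n ∈ Ico (2 ^ 2 ^ j) ((2 ^ 2 ^ j) ^ 2)) :
    Nat.log 2 (Nat.log 2 n) = j := by
  have hlo : 2 ^ j ≤ Nat.log 2 n := Nat.le_log_of_pow_le one_lt_two hn.1
  have hhi : Nat.log 2 n < 2 ^ (j + 1) := by
    refine Nat.log_lt_of_lt_pow' (by positivity) ?_
    rw [pow_succ, pow_mul]
    exact hn.2
  have hpos : Nat.log 2 n ≠ 0 := Nat.one_le_iff_ne_zero.1 (Nat.one_le_two_pow.trans hlo)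
  exact (Nat.log_eq_iff (Or.inr ⟨one_lt_two, hpos⟩)).2 ⟨hlo, hhi⟩

theorem frequently_disjoint_setOf_log_log_Ico {P : ℕ → Prop} (hP : ∃ᶠ j in atTop, ¬ P j) :
    ∃ᶠ m in atTop, Disjoint {n | P (Nat.log 2 (Nat.log 2 n))} (Ico m (m ^ 2)) := by
  refine ((tendsto_pow_atTop_atTop_of_one_lt one_lt_two).comp
    (tendsto_pow_atTop_atTop_of_one_lt one_lt_two)).frequently (hP.mono fun j hj => ?_)
  refine disjoint_right.2 fun n hn hPn => hj ?_
  rwa [mem_ofPred_eq, log_log_eq_of_mem_Ico hn] at hPn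

theorem dimH_binaryDigitSet_setOf_log_log_eq_zero {P : ℕ → Prop} (hP : ∃ᶠ j in atTop, ¬ P j) :
    dimH (binaryDigitSet {n | P (Nat.log 2 (Nat.log 2 n))}) = 0 :=
  dimH_binaryDigitSet_eq_zero <| frequently_ncard_inter_Iio_le_of_frequently_disjoint_Ico
    (frequently_disjoint_setOf_log_log_Ico hP)

/-- There are compact sets `X, Y ⊆ ℝ` of Hausdorff dimension zero
whose difference set `X - Y` contains the interval `[0,1]`. -/
theorem exists_zero_dim_sets_difference_contains_interval :
    ∃ X Y : Set ℝ, IsCompact X ∧ IsCompact Y ∧ dimH X = 0 ∧ dimH Y = 0 ∧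
      Set.Icc (0:ℝ) 1 ⊆ {d : ℝ | ∃ x ∈ X, ∃ y ∈ Y, d = x - y} := by
  set S : Set ℕ := {n | Even (Nat.log 2 (Nat.log 2 n))}
  refine ⟨binaryDigitSet S, -binaryDigitSet Sᶜ, isCompact_binaryDigitSet S,
    (isCompact_binaryDigitSet Sᶜ).neg, ?_, ?_, fun t ht => ?_⟩
  · exact dimH_binaryDigitSet_setOf_log_log_eq_zero
      (Nat.frequently_odd.mono fun j hj => Nat.not_even_iff_odd.2 hj)
  · rw [← image_neg_eq_neg, isometry_neg.dimH_image]
    exact dimH_binaryDigitSet_setOf_log_log_eq_zero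
      (Nat.frequently_even.mono fun j hj => not_not.2 hj)
  · obtain ⟨x, hx, y, hy, rfl⟩ := Icc_subset_binaryDigitSet_add_binaryDigitSet_compl S ht
    exact ⟨x, hx, -y, neg_mem_neg.2 hy, (sub_neg_eq_add x y).symm⟩
end

section
/- Let A = C × {0} ⊆ ℝ² where C ⊆ ℝ is a compact set with dim C = 1 and H¹(C) = 0. Then dim A = 1 = n/2 (n = 2), and for every a ∈ A, the pinned dot product set Π_0^a(A) := {a·y : y ∈ A} satisfies H¹(Π_0^a(A)) = 0. Hence the threshold n/2 in the pinned dot product conjecture cannot be lowered when n = 2. -/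
open MeasureTheory Set
open scoped ENNReal

/-! The line `C × {0}` is an isometric copy of `C`, so it has dimension `dim C = 1` and
`H¹`-measure `H¹(C) = 0`. A pinned dot product set `{a · y : y ∈ A}` is the image of `A` under
the linear, hence Lipschitz, functional `⟪a, ·⟫`, and Lipschitz maps send `H¹`-null sets to
`H¹`-null sets. -/

theorem LipschitzWith.hausdorffMeasure_image_eq_zero {X Y : Type*} [EMetricSpace X]
    [MeasurableSpace X] [BorelSpace X] [EMetricSpace Y] [MeasurableSpace Y] [BorelSpace Y]
    {K : NNReal} {f : X → Y} (hf : LipschitzWith K f) {d : ℝ} (hd : 0 ≤ d) {s : Set X}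
    (hs : μH[d] s = 0) : μH[d] (f '' s) = 0 :=
  nonpos_iff_eq_zero.1 <| (hf.hausdorffMeasure_image_le hd s).trans_eq (by rw [hs, mul_zero])

theorem PiLp.isometry_single {p : ℝ≥0∞} [Fact (1 ≤ p)] {ι : Type*} [Fintype ι] [DecidableEq ι]
    {β : ι → Type*} [∀ i, SeminormedAddCommGroup (β i)] (i : ι) :
    Isometry (PiLp.single p (β := β) i) :=
  Isometry.of_dist_eq (PiLp.dist_single_same p β i)

theorem isometry_fin_two_first_coordinate :
    Isometry (fun c : ℝ => (WithLp.equiv 2 (Fin 2 → ℝ)).symm ![c, 0]) := by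
  have h : (fun c : ℝ => (WithLp.equiv 2 (Fin 2 → ℝ)).symm ![c, 0]) = PiLp.single 2 (β := fun _ => ℝ) 0 := by
    ext c i
    fin_cases i <;> simp
  exact h ▸ PiLp.isometry_single 0

theorem sharpness_example_plane_general (C : Set ℝ)
    (hdimC : dimH C = 1) (hmeasC : μH[1] C = 0) :
    dimH ((fun c : ℝ => (WithLp.equiv 2 (Fin 2 → ℝ)).symm ![c, 0]) '' C) = 1 ∧
    ∀ a ∈ (fun c : ℝ => (WithLp.equiv 2 (Fin 2 → ℝ)).symm ![c, 0]) '' C,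
      μH[1] {α : ℝ | ∃ y ∈ (fun c : ℝ => (WithLp.equiv 2 (Fin 2 → ℝ)).symm ![c, 0]) '' C,
        (inner ℝ a y : ℝ) = α} = 0 := by
  have hiso := isometry_fin_two_first_coordinate
  refine ⟨by rw [hiso.dimH_image, hdimC], fun a _ => ?_⟩
  have hA : μH[1] ((fun c : ℝ => (WithLp.equiv 2 (Fin 2 → ℝ)).symm ![c, 0]) '' C) = 0 := by
    rw [hiso.hausdorffMeasure_image (.inl zero_le_one), hmeasC]
  exact (innerSL ℝ a).lipschitz.hausdorffMeasure_image_eq_zero zero_le_one hA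

/-- sharpness in the plane: Let `C ⊆ ℝ` be compact with
`dim C = 1` and `H¹(C) = 0`, and let `A = C × {0} ⊆ ℝ²`. Then `dim A = 1 = n/2`
and for every `a ∈ A` the pinned dot product set `Π_0^a(A) = {a·y : y ∈ A}` has
`H¹` measure zero. -/
theorem sharpness_example_plane (C : Set ℝ) (hC : IsCompact C)
    (hdimC : dimH C = 1) (hmeasC : μH[1] C = 0) :
    dimH ((fun c : ℝ => (WithLp.equiv 2 (Fin 2 → ℝ)).symm ![c, 0]) '' C) = 1 ∧
    ∀ a ∈ (fun c : ℝ => (WithLp.equiv 2 (Fin 2 → ℝ)).symm ![c, 0]) '' C,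
      μH[1] {α : ℝ | ∃ y ∈ (fun c : ℝ => (WithLp.equiv 2 (Fin 2 → ℝ)).symm ![c, 0]) '' C,
        (inner ℝ a y : ℝ) = α} = 0 :=
  sharpness_example_plane_general C hdimC hmeasC
end
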